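/- arXiv:2503.19093 — 7 statements merged into one kernel-verified Lean document; each statement's English description precedes it below -/
import Mathlib

section
/- Let (X, ρ) be a finite distance space and let d ≥ 1 be an integer. Then (X, ρ) is d-embeddable if and only if every subset Y ⊆ X with |Y| ≤ d + 3 is d-embeddable. -/
open Finset

local notation "⟪" x ", " y "⟫" => inner (𝕜 := ℝ) x y

/-- Local-to-global lemma for Gram realizations: if every subset of `X` with at most
`d + 2` elements admits a system of vectors in `ℝ^d` realizing `g` as inner products,
then so does `X` itself. -/
lemma gram_local_global {α : Type*} (d : ℕ) (X : Finset α) (g : α → α → ℝ)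
    (H : ∀ S ⊆ X, S.card ≤ d + 2 → ∃ v : α → EuclideanSpace ℝ (Fin d),
      ∀ x ∈ S, ∀ y ∈ S, g x y = ⟪v x, v y⟫) :
    ∃ v : α → EuclideanSpace ℝ (Fin d), ∀ x ∈ X, ∀ y ∈ X, g x y = ⟪v x, v y⟫ := by
  classical
  -- the property of being a realized, linearly independent subset
  set P : Finset α → Prop := fun I => ∃ w : α → EuclideanSpace ℝ (Fin d),
      (∀ x ∈ I, ∀ y ∈ I, g x y = ⟪w x, w y⟫) ∧
      (∀ c : α → ℝ, (∑ i ∈ I, c i • w i) = 0 → ∀ i ∈ I, c i = 0) with hP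
  set T : Finset (Finset α) := X.powerset.filter P with hT
  have hTne : (∅ : Finset α) ∈ T := by
    refine mem_filter.2 ⟨mem_powerset.2 (empty_subset X), ?_⟩
    exact ⟨fun _ => 0, fun x hx => absurd hx (notMem_empty x),
      fun c hc i hi => absurd hi (notMem_empty i)⟩
  obtain ⟨I, hIT, hImax⟩ := T.exists_max_image Finset.card ⟨∅, hTne⟩
  obtain ⟨hIX', ⟨w, hw, hwind⟩⟩ := mem_filter.1 hIT
  have hIX : I ⊆ X := mem_powerset.1 hIX'
  -- |I| ≤ d
  have hId : I.card ≤ d := by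
    have hli : LinearIndependent ℝ (fun i : ↑I => w ↑i) := by
      rw [Fintype.linearIndependent_iff]
      intro c hc i
      set c' : α → ℝ := fun x => if h : x ∈ I then c ⟨x, h⟩ else 0 with hc'
      have hsum : (∑ i ∈ I, c' i • w i) = 0 := by
        rw [← Finset.sum_coe_sort I (fun i => c' i • w i)]
        have : ∀ j : ↑I, c' ↑j • w ↑j = c j • w ↑j := by
          intro j; simp [hc', j.2]
        rw [Finset.sum_congr rfl (fun j _ => this j)]
        exact hc
      have := hwind c' hsum i i.2
      simpa [hc', i.2] using this
    have := hli.fintype_card_le_finrank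
    simpa [finrank_euclideanSpace_fin, Fintype.card_coe] using this
  -- uniqueness of coefficient solutions, via the independent family w
  have uniq : ∀ c : α → ℝ, (∀ i' ∈ I, (∑ i ∈ I, c i * g i' i) = 0) → ∀ i ∈ I, c i = 0 := by
    intro c hc
    apply hwind c
    set z : EuclideanSpace ℝ (Fin d) := ∑ i ∈ I, c i • w i with hz
    have hz0 : ∀ i' ∈ I, ⟪w i', z⟫ = 0 := by
      intro i' hi'
      rw [hz, inner_sum]
      have : ∀ i ∈ I, ⟪w i', c i • w i⟫ = c i * g i' i := by
        intro i hi
        rw [real_inner_smul_right, ← hw i' hi' i hi]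
      rw [Finset.sum_congr rfl this]
      exact hc i' hi'
    have hzz : ⟪z, z⟫ = (0 : ℝ) := by
      conv_lhs => rw [hz, sum_inner]
      have : ∀ i' ∈ I, ⟪c i' • w i', z⟫ = 0 := by
        intro i' hi'
        rw [real_inner_smul_left, hz0 i' hi', mul_zero]
      rw [Finset.sum_congr rfl this, Finset.sum_const_zero]
    have : z = 0 := by
      have := inner_self_eq_zero (𝕜 := ℝ) (x := z)
      exact this.1 hzz
    exact this
  -- every point of a realized set containing I is spanned by the I-part
  have SPAN : ∀ S : Finset α, I ⊆ S → S ⊆ X → ∀ u : α → EuclideanSpace ℝ (Fin d),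
      (∀ x ∈ S, ∀ y ∈ S, g x y = ⟪u x, u y⟫) → ∀ j ∈ S,
      ∃ x : α → ℝ, (u j = ∑ i ∈ I, x i • u i) ∧
        (∀ i' ∈ I, (∑ i ∈ I, x i * g i' i) = g i' j) := by
    intro S hIS hSX u hu j hjS
    have hex : ∃ x : α → ℝ, u j = ∑ i ∈ I, x i • u i := by
      by_cases hjI : j ∈ I
      · refine ⟨fun i => if i = j then 1 else 0, ?_⟩
        rw [Finset.sum_congr rfl (fun i _ => by
          simp only []
          rfl)]
        simp [Finset.sum_ite_eq' I j (fun i => (1:ℝ) • u i), hjI]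
      · by_contra hno
        push_neg at hno
        -- then insert j I is in T, contradicting maximality
        have hmem : insert j I ∈ T := by
          refine mem_filter.2 ⟨mem_powerset.2 (insert_subset (hSX hjS) hIX), ?_⟩
          refine ⟨u, ?_, ?_⟩
          · intro x hx y hy
            exact hu x (insert_subset hjS hIS hx) y (insert_subset hjS hIS hy)
          · intro c hc0 i hi
            have hsum : c j • u j + ∑ i ∈ I, c i • u i = 0 := by
              rwa [Finset.sum_insert hjI] at hc0
            have hcj : c j = 0 := by
              by_contra hcj
              apply hno (fun i => -(c j)⁻¹ * c i)
              have : u j = (-(c j)⁻¹) • ∑ i ∈ I, c i • u i := by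
                have h1 : c j • u j = -(∑ i ∈ I, c i • u i) := by
                  linear_combination (norm := module) hsum
                calc u j = (c j)⁻¹ • (c j • u j) := by
                      rw [smul_smul, inv_mul_cancel₀ hcj, one_smul]
                  _ = (c j)⁻¹ • (-(∑ i ∈ I, c i • u i)) := by rw [h1]
                  _ = (-(c j)⁻¹) • ∑ i ∈ I, c i • u i := by
                      rw [smul_neg, ← neg_smul]
              rw [this, Finset.smul_sum]
              exact Finset.sum_congr rfl (fun i _ => by rw [smul_smul])
            have hrest : (∑ i ∈ I, c i • u i) = 0 := by
              rw [hcj, zero_smul, zero_add] at hsum; exact hsum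
            have hnum : ∀ i' ∈ I, (∑ i ∈ I, c i * g i' i) = 0 := by
              intro i' hi'
              have : ⟪u i', ∑ i ∈ I, c i • u i⟫ = (0 : ℝ) := by
                rw [hrest, inner_zero_right]
              rw [inner_sum] at this
              rw [← this]
              refine Finset.sum_congr rfl (fun i hi2 => ?_)
              rw [real_inner_smul_right, ← hu i' (hIS hi') i (hIS hi2)]
            rcases mem_insert.1 hi with rfl | hi
            · exact hcj
            · exact uniq c hnum i hi
        have hle := hImax (insert j I) hmem
        rw [card_insert_of_notMem hjI] at hle
        omega
    obtain ⟨x, hx⟩ := hex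
    refine ⟨x, hx, ?_⟩
    intro i' hi'
    have : ⟪u i', u j⟫ = ∑ i ∈ I, x i * g i' i := by
      rw [hx, inner_sum]
      refine Finset.sum_congr rfl (fun i hi => ?_)
      rw [real_inner_smul_right, ← hu i' (hIS hi') i (hIS hi)]
    rw [← this, ← hu i' (hIS hi') j hjS]
  -- choose canonical coefficients for every point of X
  have hSolE : ∀ j ∈ X, ∃ x : α → ℝ, ∀ i' ∈ I, (∑ i ∈ I, x i * g i' i) = g i' j := by
    intro j hj
    have hsub : insert j I ⊆ X := insert_subset hj hIX
    have hcard : (insert j I).card ≤ d + 2 := by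
      have := card_insert_le j I; omega
    obtain ⟨u, hu⟩ := H (insert j I) hsub hcard
    obtain ⟨x, _, hx2⟩ := SPAN (insert j I) (subset_insert j I) hsub u hu j
      (mem_insert_self j I)
    exact ⟨x, hx2⟩
  choose! a ha using hSolE
  refine ⟨fun j => ∑ i ∈ I, a j i • w i, ?_⟩
  intro x hx y hy
  set S : Finset α := insert x (insert y I) with hS
  have hIS : I ⊆ S := (subset_insert y I).trans (subset_insert x _)
  have hSX : S ⊆ X := insert_subset hx (insert_subset hy hIX)
  have hScard : S.card ≤ d + 2 := by
    have h1 := card_insert_le x (insert y I)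
    have h2 := card_insert_le y I
    rw [hS]
    omega
  obtain ⟨u, hu⟩ := H S hSX hScard
  obtain ⟨p, hp1, hp2⟩ := SPAN S hIS hSX u hu x (mem_insert_self x _)
  obtain ⟨q, hq1, hq2⟩ := SPAN S hIS hSX u hu y
    (mem_insert_of_mem (mem_insert_self y I))
  have hpa : ∀ i ∈ I, p i = a x i := by
    intro i hi
    have := uniq (fun i => p i - a x i) (fun i' hi' => by
      have e1 := hp2 i' hi'
      have e2 := ha x hx i' hi'
      have : (∑ i ∈ I, (p i - a x i) * g i' i)
          = (∑ i ∈ I, p i * g i' i) - ∑ i ∈ I, a x i * g i' i := by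
        rw [← Finset.sum_sub_distrib]
        exact Finset.sum_congr rfl (fun i _ => by ring)
      rw [this, e1, e2, sub_self]) i hi
    have h0 : p i - a x i = 0 := this
    linarith
  have hqa : ∀ i ∈ I, q i = a y i := by
    intro i hi
    have := uniq (fun i => q i - a y i) (fun i' hi' => by
      have e1 := hq2 i' hi'
      have e2 := ha y hy i' hi'
      have : (∑ i ∈ I, (q i - a y i) * g i' i)
          = (∑ i ∈ I, q i * g i' i) - ∑ i ∈ I, a y i * g i' i := by
        rw [← Finset.sum_sub_distrib]
        exact Finset.sum_congr rfl (fun i _ => by ring)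
      rw [this, e1, e2, sub_self]) i hi
    have h0 : q i - a y i = 0 := this
    linarith
  have expand : ∀ (v' : α → EuclideanSpace ℝ (Fin d)) (c c' : α → ℝ),
      (∀ x' ∈ I, ∀ y' ∈ I, g x' y' = ⟪v' x', v' y'⟫) →
      ⟪∑ i ∈ I, c i • v' i, ∑ i ∈ I, c' i • v' i⟫
        = ∑ i ∈ I, ∑ i' ∈ I, c i * (c' i' * g i i') := by
    intro v' c c' hv'
    rw [sum_inner]
    refine Finset.sum_congr rfl (fun i hi => ?_)
    rw [real_inner_smul_left, inner_sum]
    rw [Finset.mul_sum]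
    refine Finset.sum_congr rfl (fun i' hi' => ?_)
    rw [real_inner_smul_right, ← hv' i hi i' hi']
  have hux : g x y = ⟪u x, u y⟫ := hu x (mem_insert_self x _) y
    (mem_insert_of_mem (mem_insert_self y I))
  have huI : ∀ x' ∈ I, ∀ y' ∈ I, g x' y' = ⟪u x', u y'⟫ := fun x' hx' y' hy' =>
    hu x' (hIS hx') y' (hIS hy')
  rw [hux, hp1, hq1, expand u p q huI, expand w (a x) (a y) hw]
  refine Finset.sum_congr rfl (fun i hi => Finset.sum_congr rfl (fun i' hi' => ?_))
  rw [hpa i hi, hqa i' hi']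

/-- `(X, ρ)` is a distance space: `ρ` is symmetric, nonnegative and vanishes on the
diagonal on the points of `X`. -/
def IsDistance {α : Type*} (X : Finset α) (ρ : α → α → ℝ) : Prop :=
  (∀ x ∈ X, ∀ y ∈ X, ρ x y = ρ y x) ∧ (∀ x ∈ X, ∀ y ∈ X, 0 ≤ ρ x y) ∧ (∀ x ∈ X, ρ x x = 0)

/-- `(X, ρ)` is isometrically embeddable into `ℝ^d`. -/
def IsEmbeddable {α : Type*} (X : Finset α) (ρ : α → α → ℝ) (d : ℕ) : Prop :=
  ∃ φ : α → EuclideanSpace ℝ (Fin d), ∀ x ∈ X, ∀ y ∈ X, ρ x y = dist (φ x) (φ y)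

/-- `(X, ρ)` is strongly `d`-embeddable: `d`-embeddable but (for `d ≥ 1`)
not `(d-1)`-embeddable. -/
def IsStronglyEmbeddable {α : Type*} (X : Finset α) (ρ : α → α → ℝ) (d : ℕ) : Prop :=
  IsEmbeddable X ρ d ∧ (0 < d → ¬ IsEmbeddable X ρ (d - 1))

/-- A nonempty set `Y` with `|Y| = r + 1` is independent if `(Y, ρ)` is strongly
`r`-embeddable. -/
def IsIndependent {α : Type*} (Y : Finset α) (ρ : α → α → ℝ) : Prop :=
  Y.Nonempty ∧ IsStronglyEmbeddable Y ρ (Y.card - 1)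

/-- a finite distance space is `d`-embeddable iff every subset of at most
`d + 3` points is `d`-embeddable. -/
theorem stmt1 {α : Type*} (X : Finset α) (ρ : α → α → ℝ) (hD : IsDistance X ρ)
    (d : ℕ) (hd : 1 ≤ d) :
    IsEmbeddable X ρ d ↔ ∀ Y ⊆ X, Y.card ≤ d + 3 → IsEmbeddable Y ρ d := by
  classical
  constructor
  · rintro ⟨φ, hφ⟩ Y hY -
    exact ⟨φ, fun x hx y hy => hφ x (hY hx) y (hY hy)⟩
  · intro h
    rcases X.eq_empty_or_nonempty with rfl | ⟨x0, hx0⟩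
    · exact ⟨fun _ => 0, fun x hx => absurd hx (notMem_empty x)⟩
    set g : α → α → ℝ := fun x y => (ρ x0 x ^ 2 + ρ x0 y ^ 2 - ρ x y ^ 2) / 2 with hg
    have Hloc : ∀ S ⊆ X, S.card ≤ d + 2 → ∃ v : α → EuclideanSpace ℝ (Fin d),
        ∀ x ∈ S, ∀ y ∈ S, g x y = ⟪v x, v y⟫ := by
      intro S hS hcard
      have hsub : insert x0 S ⊆ X := insert_subset hx0 hS
      have hc2 : (insert x0 S).card ≤ d + 3 := by
        have := card_insert_le x0 S; omega
      obtain ⟨φ, hφ⟩ := h (insert x0 S) hsub hc2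
      refine ⟨fun z => φ z - φ x0, ?_⟩
      intro x hx y hy
      have h0x : ρ x0 x = ‖φ x - φ x0‖ := by
        rw [hφ x0 (mem_insert_self x0 S) x (mem_insert_of_mem hx), dist_eq_norm,
          norm_sub_rev]
      have h0y : ρ x0 y = ‖φ y - φ x0‖ := by
        rw [hφ x0 (mem_insert_self x0 S) y (mem_insert_of_mem hy), dist_eq_norm,
          norm_sub_rev]
      have hxy : ρ x y = ‖(φ x - φ x0) - (φ y - φ x0)‖ := by
        rw [hφ x (mem_insert_of_mem hx) y (mem_insert_of_mem hy), dist_eq_norm]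
        congr 1
        abel
      have key := norm_sub_sq_real (φ x - φ x0) (φ y - φ x0)
      rw [hg]
      simp only []
      rw [h0x, h0y, hxy]
      linarith
    obtain ⟨v, hv⟩ := gram_local_global d X g Hloc
    refine ⟨v, ?_⟩
    intro x hx y hy
    have key := norm_sub_sq_real (v x) (v y)
    have e1 : ⟪v x, v y⟫ = g x y := (hv x hx y hy).symm
    have e2 : ‖v x‖ ^ 2 = g x x := by
      rw [hv x hx x hx, real_inner_self_eq_norm_sq]
    have e3 : ‖v y‖ ^ 2 = g y y := by
      rw [hv y hy y hy, real_inner_self_eq_norm_sq]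
    have hxx : ρ x x = 0 := hD.2.2 x hx
    have hyy : ρ y y = 0 := hD.2.2 y hy
    have hsq : ρ x y ^ 2 = dist (v x) (v y) ^ 2 := by
      rw [dist_eq_norm, key, e1, e2, e3, hg]
      simp only []
      rw [hxx, hyy]
      ring
    have h1 : 0 ≤ ρ x y := hD.2.1 x hx y hy
    have h2 : 0 ≤ dist (v x) (v y) := dist_nonneg
    nlinarith [hsq, h1, h2]
end

section
/- Let (X, ρ) be a finite distance space that is strongly d-embeddable for an integer d ≥ 1. Then every independent subset of X has size at most d + 1, and there exists an independent subset of X of size exactly d + 1. -/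
/-!
A realisation `φ` of a strongly `d`-embeddable space in `ℝ^d` affinely spans `ℝ^d`: otherwise
orthogonal projection onto the span of the differences `φ x - φ y` would realise the space in
lower dimension. Hence `φ(X)` contains an affine basis, i.e. `d + 1` affinely independent points,
and their preimages form an independent set: any other realisation of the same distances has the
same Gram matrix of edge vectors, so it is again affinely independent and needs dimension `≥ d`.
The upper bound is immediate, since an independent set of size `r + 1 > d + 1` would embed in
`ℝ^d ⊆ ℝ^(r-1)`.
-/

open Module

theorem exists_linearIsometry_of_finrank_le {𝕜 E F : Type*} [RCLike 𝕜]
    [NormedAddCommGroup E] [InnerProductSpace 𝕜 E] [FiniteDimensional 𝕜 E]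
    [NormedAddCommGroup F] [InnerProductSpace 𝕜 F] [FiniteDimensional 𝕜 F]
    (h : finrank 𝕜 E ≤ finrank 𝕜 F) : Nonempty (E →ₗᵢ[𝕜] F) := by
  let bE := stdOrthonormalBasis 𝕜 E
  let bF := stdOrthonormalBasis 𝕜 F
  let f : E →ₗ[𝕜] F := bE.toBasis.constr 𝕜 fun i => bF (Fin.castLE h i)
  have hf : f ∘ bE.toBasis = bF ∘ Fin.castLE h :=
    funext fun i => bE.toBasis.constr_basis 𝕜 _ i
  refine ⟨f.isometryOfOrthonormal (v := bE.toBasis) (by simp [bE.orthonormal]) ?_⟩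
  rw [hf]
  exact bF.orthonormal.comp _ (Fin.castLE_injective h)

theorem Congruent.affineIndependent {ι V₁ V₂ P₁ P₂ : Type*} [Finite ι]
    [NormedAddCommGroup V₁] [InnerProductSpace ℝ V₁] [MetricSpace P₁]
    [NormedAddTorsor V₁ P₁] [NormedAddCommGroup V₂] [InnerProductSpace ℝ V₂] [MetricSpace P₂]
    [NormedAddTorsor V₂ P₂] {v₁ : ι → P₁} {v₂ : ι → P₂} (h : Congruent v₁ v₂)
    (hv : AffineIndependent ℝ v₁) : AffineIndependent ℝ v₂ := by
  rcases isEmpty_or_nonempty ι with _ | ⟨⟨i₀⟩⟩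
  · exact affineIndependent_of_subsingleton ℝ v₂
  rw [affineIndependent_iff_linearIndependent_vsub ℝ _ i₀] at hv ⊢
  -- the Gram matrix of the edge vectors at `i₀` is determined by the pairwise distances
  have hgram : Matrix.gram ℝ (fun i : {i // i ≠ i₀} => v₁ i -ᵥ v₁ i₀) =
      Matrix.gram ℝ (fun i : {i // i ≠ i₀} => v₂ i -ᵥ v₂ i₀) := by
    ext i j
    simp_rw [Matrix.gram_apply,
      real_inner_eq_norm_mul_self_add_norm_mul_self_sub_norm_sub_mul_self_div_two,
      vsub_sub_vsub_cancel_right, ← dist_eq_norm_vsub, h.dist_eq]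
  rw [← Matrix.posDef_gram_iff_linearIndependent] at hv ⊢
  rwa [← hgram]

namespace IsEmbeddable

variable {α : Type*} {X Y : Finset α} {ρ : α → α → ℝ}

theorem of_finrank_le {E : Type*} [NormedAddCommGroup E] [InnerProductSpace ℝ E]
    [FiniteDimensional ℝ E] {d : ℕ} (φ : α → E)
    (hφ : ∀ x ∈ X, ∀ y ∈ X, ρ x y = dist (φ x) (φ y)) (h : finrank ℝ E ≤ d) :
    IsEmbeddable X ρ d := by
  obtain ⟨L⟩ := exists_linearIsometry_of_finrank_le (F := EuclideanSpace ℝ (Fin d))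
    (by rwa [finrank_euclideanSpace_fin])
  exact ⟨fun x => L (φ x), fun x hx y hy => by rw [hφ x hx y hy, L.dist_map]⟩

theorem mono {d e : ℕ} (h : d ≤ e) (hX : IsEmbeddable X ρ d) : IsEmbeddable X ρ e := by
  obtain ⟨φ, hφ⟩ := hX
  exact of_finrank_le φ hφ (by rwa [finrank_euclideanSpace_fin])

theorem subset (h : Y ⊆ X) {d : ℕ} (hX : IsEmbeddable X ρ d) : IsEmbeddable Y ρ d := by
  obtain ⟨φ, hφ⟩ := hX
  exact ⟨φ, fun x hx y hy => hφ x (h hx) y (h hy)⟩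

/-- Orthogonal projection onto the span of the differences keeps all distances inside `X`. -/
theorem finrank_vectorSpan {E : Type*} [NormedAddCommGroup E] [InnerProductSpace ℝ E]
    (φ : α → E) (hφ : ∀ x ∈ X, ∀ y ∈ X, ρ x y = dist (φ x) (φ y)) :
    IsEmbeddable X ρ (finrank ℝ (vectorSpan ℝ (φ '' X))) := by
  set V := vectorSpan ℝ (φ '' X)
  have : FiniteDimensional ℝ V :=
    finiteDimensional_vectorSpan_of_finite ℝ (X.finite_toSet.image φ)
  refine of_finrank_le (fun x => V.orthogonalProjectionOnto (φ x)) (fun x hx y hy => ?_) le_rfl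
  have hmem : φ x - φ y ∈ V := vsub_mem_vectorSpan ℝ (Set.mem_image_of_mem φ hx)
    (Set.mem_image_of_mem φ hy)
  rw [hφ x hx y hy, dist_eq_norm, dist_eq_norm, ← map_sub]
  exact (V.norm_orthogonalProjectionOnto_apply hmem).symm

end IsEmbeddable

section

variable {α : Type*} {X : Finset α} {ρ : α → α → ℝ}

theorem IsStronglyEmbeddable.affineSpan_eq_top {d : ℕ} (hd : 0 < d)
    (hX : IsStronglyEmbeddable X ρ d) {φ : α → EuclideanSpace ℝ (Fin d)}
    (hφ : ∀ x ∈ X, ∀ y ∈ X, ρ x y = dist (φ x) (φ y)) :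
    affineSpan ℝ (φ '' X) = ⊤ := by
  have : Nontrivial (EuclideanSpace ℝ (Fin d)) := by
    rw [← finrank_pos_iff (R := ℝ), finrank_euclideanSpace_fin]; exact hd
  rw [AffineSubspace.affineSpan_eq_top_iff_vectorSpan_eq_top_of_nontrivial]
  by_contra hV
  have hlt := Submodule.finrank_lt hV
  rw [finrank_euclideanSpace_fin] at hlt
  exact hX.2 hd ((IsEmbeddable.finrank_vectorSpan φ hφ).mono (by omega))

theorem isIndependent_of_affineIndependent {E : Type*} [NormedAddCommGroup E]
    [InnerProductSpace ℝ E] {Y : Finset α} (hY : Y.Nonempty) (φ : α → E)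
    (hφ : ∀ x ∈ Y, ∀ y ∈ Y, ρ x y = dist (φ x) (φ y))
    (hind : AffineIndependent ℝ fun y : Y => φ y) : IsIndependent Y ρ := by
  refine ⟨hY, ?_, fun hpos ⟨ψ, hψ⟩ => ?_⟩
  · have hrank : finrank ℝ (vectorSpan ℝ (φ '' Y)) = Y.card - 1 := by
      rw [Set.image_eq_range]
      exact hind.finrank_vectorSpan (by rw [Fintype.card_coe]; have := hY.card_pos; omega)
    exact hrank ▸ IsEmbeddable.finrank_vectorSpan φ hφ
  · have hcong : Congruent (fun y : Y => φ y) (fun y : Y => ψ y) :=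
      congruent_iff_dist_eq.2 fun x y => by rw [← hφ x x.2 y y.2, hψ x x.2 y y.2]
    have hcard := (hcong.affineIndependent hind).card_le_finrank_succ.trans
      (Nat.add_le_add_right (Submodule.finrank_le _) 1)
    rw [Fintype.card_coe, finrank_euclideanSpace_fin] at hcard
    omega

theorem Finset.exists_subset_affineIndependent_card_eq {E : Type*} [NormedAddCommGroup E]
    [InnerProductSpace ℝ E] [FiniteDimensional ℝ E] (X : Finset α) (φ : α → E)
    (hX : affineSpan ℝ (φ '' X) = ⊤) :
    ∃ Y ⊆ X, AffineIndependent ℝ (fun y : Y => φ y) ∧ Y.card = finrank ℝ E + 1 := by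
  obtain ⟨t, htX, htspan, htind⟩ := exists_affineIndependent ℝ E (φ '' X)
  obtain ⟨Y, hYX, hbij⟩ := Set.SurjOn.exists_bijOn_subset htX
  lift Y to Finset α using X.finite_toSet.subset hYX
  let e : Y ↪ t := ⟨fun y => ⟨φ y, hbij.mapsTo y.2⟩,
    fun a b h => Subtype.ext (hbij.injOn a.2 b.2 (congrArg Subtype.val h))⟩
  have hind : AffineIndependent ℝ fun y : Y => φ y := htind.comp_embedding e
  have hspan : affineSpan ℝ (Set.range fun y : Y => φ y) = ⊤ := by
    rw [show Set.range (fun y : Y => φ y) = φ '' Y by ext; simp, hbij.image_eq, htspan, hX]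
  refine ⟨Y, Finset.coe_subset.1 hYX, hind, ?_⟩
  simpa using hind.affineSpan_eq_top_iff_card_eq_finrank_add_one.1 hspan

end

theorem stmt6_general {α : Type*} (X : Finset α) (ρ : α → α → ℝ)
    (d : ℕ) (hd : 1 ≤ d) (hX : IsStronglyEmbeddable X ρ d) :
    (∀ Y ⊆ X, IsIndependent Y ρ → Y.card ≤ d + 1) ∧
      (∃ Y ⊆ X, IsIndependent Y ρ ∧ Y.card = d + 1) := by
  refine ⟨fun Y hYX ⟨_, _, hYnot⟩ => ?_, ?_⟩
  · by_contra! hlt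
    exact hYnot (by omega) ((hX.1.subset hYX).mono (by omega))
  obtain ⟨φ, hφ⟩ := hX.1
  obtain ⟨Y, hYX, hind, hcard⟩ :=
    X.exists_subset_affineIndependent_card_eq φ (hX.affineSpan_eq_top hd hφ)
  rw [finrank_euclideanSpace_fin] at hcard
  exact ⟨Y, hYX, isIndependent_of_affineIndependent (Finset.card_pos.1 (by omega)) φ
    (fun x hx y hy => hφ x (hYX hx) y (hYX hy)) hind, hcard⟩

/-- in a strongly `d`-embeddable finite distance space, every independent
set has size at most `d + 1`, and some independent set has size exactly `d + 1`. -/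
theorem stmt6 {α : Type*} (X : Finset α) (ρ : α → α → ℝ) (hD : IsDistance X ρ)
    (d : ℕ) (hd : 1 ≤ d) (hX : IsStronglyEmbeddable X ρ d) :
    (∀ Y ⊆ X, IsIndependent Y ρ → Y.card ≤ d + 1) ∧
      (∃ Y ⊆ X, IsIndependent Y ρ ∧ Y.card = d + 1) :=
  stmt6_general X ρ d hd hX
end

section
/- Let (X, ρ) be a finite distance space that is strongly d-embeddable for an integer d ≥ 1, and let Y ⊆ X be an independent set of size d + 1. Then Y is a metric basis: if φ₁ and φ₂ are isometric embeddings of (X, ρ) into ℝ^d that agree on Y (i.e., φ₁(y) = φ₂(y) for all y ∈ Y), then φ₁ = φ₂. -/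
/-!
The isometric image of an independent set of `d + 1` points affinely spans `ℝ^d`: otherwise
orthogonal projection onto its (smaller) vector span, followed by a linear isometry into
`ℝ^(d-1)`, would embed it into `ℝ^(d-1)`. And a point is determined by its distances to an
affinely spanning set, because two such points would put the whole set inside their
perpendicular bisector, a proper affine subspace.
-/

open Module

theorem EuclideanGeometry.eq_of_forall_dist_eq_of_vectorSpan_eq_top
    {V P : Type*} [NormedAddCommGroup V] [InnerProductSpace ℝ V] [MetricSpace P]
    [NormedAddTorsor V P] {s : Set P} (hs : vectorSpan ℝ s = ⊤) {p q : P}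
    (h : ∀ v ∈ s, dist p v = dist q v) : p = q := by
  have hsub : s ⊆ AffineSubspace.perpBisector p q := fun v hv =>
    AffineSubspace.mem_perpBisector_iff_dist_eq'.2 (h v hv)
  have hle : ⊤ ≤ (ℝ ∙ (q -ᵥ p))ᗮ := by
    rw [← hs, ← AffineSubspace.direction_perpBisector, AffineSubspace.direction_eq_vectorSpan]
    exact vectorSpan_mono ℝ hsub
  have hself := hle (Submodule.mem_top (x := q -ᵥ p))
  rw [Submodule.mem_orthogonal_singleton_iff_inner_right, inner_self_eq_zero,
    vsub_eq_zero_iff_eq] at hself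
  exact hself.symm

theorem exists_linearIsometry_euclideanSpace_of_finrank_le {E : Type*} [NormedAddCommGroup E]
    [InnerProductSpace ℝ E] [FiniteDimensional ℝ E] {m : ℕ} (h : finrank ℝ E ≤ m) :
    Nonempty (E →ₗᵢ[ℝ] EuclideanSpace ℝ (Fin m)) := by
  let b := (stdOrthonormalBasis ℝ E).toBasis
  let e : Fin (finrank ℝ E) → EuclideanSpace ℝ (Fin m) :=
    fun i => EuclideanSpace.single (Fin.castLE h i) 1
  have he : Orthonormal ℝ e := EuclideanSpace.orthonormal_single.comp _ (Fin.castLE_injective h)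
  refine ⟨(b.constr ℝ e).isometryOfOrthonormal (v := b) (stdOrthonormalBasis ℝ E).orthonormal ?_⟩
  convert he
  exact funext (b.constr_basis ℝ e)

theorem isEmbeddable_of_finrank_vectorSpan_le {α E : Type*} [NormedAddCommGroup E]
    [InnerProductSpace ℝ E] {Y : Finset α} {ρ : α → α → ℝ} {φ : α → E}
    (hφ : ∀ x ∈ Y, ∀ y ∈ Y, ρ x y = dist (φ x) (φ y)) {m : ℕ}
    (hm : finrank ℝ (vectorSpan ℝ (φ '' Y)) ≤ m) : IsEmbeddable Y ρ m := by
  set V := vectorSpan ℝ (φ '' Y)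
  have : FiniteDimensional ℝ V :=
    finiteDimensional_vectorSpan_of_finite ℝ (Y.finite_toSet.image φ)
  obtain ⟨L⟩ := exists_linearIsometry_euclideanSpace_of_finrank_le hm
  refine ⟨fun x => L (V.orthogonalProjectionOnto (φ x)), fun x hx y hy => ?_⟩
  have hmem : φ x - φ y ∈ V :=
    vsub_mem_vectorSpan ℝ (Set.mem_image_of_mem φ hx) (Set.mem_image_of_mem φ hy)
  rw [hφ x hx y hy, dist_eq_norm, dist_eq_norm, ← map_sub, ← map_sub, L.norm_map,
    Submodule.norm_orthogonalProjectionOnto_apply V hmem]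

theorem lt_finrank_vectorSpan_of_not_isEmbeddable {α E : Type*} [NormedAddCommGroup E]
    [InnerProductSpace ℝ E] {Y : Finset α} {ρ : α → α → ℝ} {φ : α → E}
    (hφ : ∀ x ∈ Y, ∀ y ∈ Y, ρ x y = dist (φ x) (φ y)) {m : ℕ}
    (hm : ¬ IsEmbeddable Y ρ m) : m < finrank ℝ (vectorSpan ℝ (φ '' Y)) :=
  lt_of_not_ge fun h => hm (isEmbeddable_of_finrank_vectorSpan_le hφ h)

theorem vectorSpan_eq_top_of_isIndependent {α : Type*} {Y : Finset α} {ρ : α → α → ℝ} {d : ℕ}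
    (hd : 1 ≤ d) (hY : IsIndependent Y ρ) (hYcard : Y.card = d + 1)
    {φ : α → EuclideanSpace ℝ (Fin d)} (hφ : ∀ x ∈ Y, ∀ y ∈ Y, ρ x y = dist (φ x) (φ y)) :
    vectorSpan ℝ (φ '' Y) = ⊤ := by
  have hnot : ¬ IsEmbeddable Y ρ (d - 1) := by
    simpa [hYcard] using hY.2.2 (by omega)
  have hlt := lt_finrank_vectorSpan_of_not_isEmbeddable hφ hnot
  apply Submodule.eq_top_of_finrank_eq
  have := Submodule.finrank_le (vectorSpan ℝ (φ '' Y))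
  rw [finrank_euclideanSpace_fin] at this ⊢
  omega

theorem stmt7_general {α : Type*} (X : Finset α) (ρ : α → α → ℝ)
    (d : ℕ) (hd : 1 ≤ d)
    (Y : Finset α) (hYX : Y ⊆ X) (hY : IsIndependent Y ρ) (hYcard : Y.card = d + 1)
    (φ₁ φ₂ : α → EuclideanSpace ℝ (Fin d))
    (h₁ : ∀ x ∈ X, ∀ y ∈ X, ρ x y = dist (φ₁ x) (φ₁ y))
    (h₂ : ∀ x ∈ X, ∀ y ∈ X, ρ x y = dist (φ₂ x) (φ₂ y))
    (hagree : ∀ y ∈ Y, φ₁ y = φ₂ y) :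
    ∀ x ∈ X, φ₁ x = φ₂ x := by
  have hspan : vectorSpan ℝ (φ₁ '' Y) = ⊤ :=
    vectorSpan_eq_top_of_isIndependent hd hY hYcard fun x hx y hy => h₁ x (hYX hx) y (hYX hy)
  intro x hx
  refine EuclideanGeometry.eq_of_forall_dist_eq_of_vectorSpan_eq_top hspan ?_
  rintro _ ⟨y, hy, rfl⟩
  rw [← h₁ x hx y (hYX hy), h₂ x hx y (hYX hy), hagree y hy]

/-- an independent set of size `d + 1` in a strongly `d`-embeddable finite
distance space is a metric basis: two isometric embeddings into `ℝ^d` agreeing on it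
agree everywhere on `X`. -/
theorem stmt7 {α : Type*} (X : Finset α) (ρ : α → α → ℝ) (hD : IsDistance X ρ)
    (d : ℕ) (hd : 1 ≤ d) (hX : IsStronglyEmbeddable X ρ d)
    (Y : Finset α) (hYX : Y ⊆ X) (hY : IsIndependent Y ρ) (hYcard : Y.card = d + 1)
    (φ₁ φ₂ : α → EuclideanSpace ℝ (Fin d))
    (h₁ : ∀ x ∈ X, ∀ y ∈ X, ρ x y = dist (φ₁ x) (φ₁ y))
    (h₂ : ∀ x ∈ X, ∀ y ∈ X, ρ x y = dist (φ₂ x) (φ₂ y))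
    (hagree : ∀ y ∈ Y, φ₁ y = φ₂ y) :
    ∀ x ∈ X, φ₁ x = φ₂ x :=
  stmt7_general X ρ d hd Y hYX hY hYcard φ₁ φ₂ h₁ h₂ hagree
end

section
/- Let (X, ρ) be a finite distance space and let d ≥ 1 be an integer. If (X, ρ) is not d-embeddable, then there exists a set Â ⊆ X with |Â| ≤ d + 3 such that Â intersects every inclusion-wise minimal d-outlier set of (X, ρ). -/
open Finset RealInnerProductSpace

section Aux

variable {α : Type*} [DecidableEq α]

private lemma emb_mono {X Y : Finset α} {ρ : α → α → ℝ} {d : ℕ} (h : Y ⊆ X)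
    (hX : IsEmbeddable X ρ d) : IsEmbeddable Y ρ d := by
  obtain ⟨φ, hφ⟩ := hX
  exact ⟨φ, fun x hx y hy => hφ x (h hx) y (h hy)⟩

private lemma inner_sum_sum {d : ℕ} (I : Finset α) (w : α → EuclideanSpace ℝ (Fin d))
    (u u' : α → ℝ) :
    ⟪∑ i ∈ I, u i • w i, ∑ i ∈ I, u' i • w i⟫ =
      ∑ i ∈ I, ∑ j ∈ I, u i * u' j * ⟪w i, w j⟫ := by
  rw [sum_inner]
  refine Finset.sum_congr rfl fun i _ => ?_
  rw [real_inner_smul_left, inner_sum, Finset.mul_sum]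
  refine Finset.sum_congr rfl fun j _ => ?_
  rw [real_inner_smul_right]; ring

/-- Gram-matrix gluing: if every subset of `X` of size at most `d + 2` admits vectors
realizing `M` as Gram matrix, then so does all of `X`. -/
private lemma gram_glue {d : ℕ} (X : Finset α) (M : α → α → ℝ)
    (H : ∀ S ⊆ X, S.card ≤ d + 2 →
      ∃ w : α → EuclideanSpace ℝ (Fin d), ∀ x ∈ S, ∀ y ∈ S, ⟪w x, w y⟫ = M x y) :
    ∃ v : α → EuclideanSpace ℝ (Fin d), ∀ x ∈ X, ∀ y ∈ X, ⟪v x, v y⟫ = M x y := by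
  classical
  set E := EuclideanSpace ℝ (Fin d) with hE
  -- the property of being a "positive definite core"
  set Q : Finset α → Prop := fun I => I ⊆ X ∧ ∃ v : α → E,
      (∀ x ∈ I, ∀ y ∈ I, ⟪v x, v y⟫ = M x y) ∧
      (∀ u : α → ℝ, ∑ i ∈ I, u i • v i = 0 → ∀ i ∈ I, u i = 0) with hQ
  -- any PD core has at most d elements
  have hQcard : ∀ I, Q I → I.card ≤ d := by
    rintro I ⟨hIX, v, hg, hli⟩
    have hLI : LinearIndependent ℝ (fun i : ↑I => v i) := by
      rw [Fintype.linearIndependent_iff]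
      intro g hs
      set u : α → ℝ := fun a => if h : a ∈ I then g ⟨a, h⟩ else 0 with hu
      have e1 : ∑ i ∈ I, u i • v i = 0 := by
        rw [← Finset.sum_attach I (fun i => u i • v i)]
        rw [← hs, Finset.univ_eq_attach]
        refine Finset.sum_congr rfl fun i _ => ?_
        simp [hu, i.2]
      intro i
      have := hli u e1 i.1 i.2
      simpa [hu, i.2] using this
    have h1 := hLI.fintype_card_le_finrank
    calc I.card = Fintype.card ↑I := (Fintype.card_coe I).symm
      _ ≤ Module.finrank ℝ E := h1
      _ = d := finrank_euclideanSpace_fin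
  -- choose a maximal PD core
  have hSne : (X.powerset.filter Q).Nonempty := by
    refine ⟨∅, mem_filter.2 ⟨mem_powerset.2 (empty_subset _), empty_subset _, 0, ?_, ?_⟩⟩
    · intro x hx; exact absurd hx (notMem_empty x)
    · intro u _ i hi; exact absurd hi (notMem_empty i)
  obtain ⟨I, hImem, hImax⟩ := Finset.exists_max_image (X.powerset.filter Q) Finset.card hSne
  obtain ⟨hIX', hQI⟩ := mem_filter.mp hImem
  have hIX : I ⊆ X := mem_powerset.mp hIX'
  obtain ⟨v0, hGram, hLI⟩ := hQI.2
  have hId : I.card ≤ d := hQcard I hQI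
  -- key: any point of X whose Gram with I is realized lies in the span of the core
  have key1 : ∀ l ∈ X, ∀ w : α → E,
      (∀ x ∈ insert l I, ∀ y ∈ insert l I, ⟪w x, w y⟫ = M x y) →
      ∃ a : α → ℝ, w l = ∑ i ∈ I, a i • w i := by
    intro l hl w hw
    by_cases hlI : l ∈ I
    · refine ⟨fun i => if i = l then 1 else 0, ?_⟩
      rw [Finset.sum_eq_single l (fun b _ hb => by simp [hb]) (fun h => absurd hlI h)]
      simp
    by_contra hcon
    push_neg at hcon
    have h7 : ∀ x ∈ I, ∀ y ∈ I, ⟪w x, w y⟫ = M x y :=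
      fun x hx y hy => hw x (mem_insert_of_mem hx) y (mem_insert_of_mem hy)
    have hwLI : ∀ u : α → ℝ, ∑ i ∈ I, u i • w i = 0 → ∀ i ∈ I, u i = 0 := by
      intro u hu
      apply hLI u
      rw [← inner_self_eq_zero (𝕜 := ℝ)]
      rw [inner_sum_sum]
      have e2 : ∑ i ∈ I, ∑ j ∈ I, u i * u j * ⟪v0 i, v0 j⟫
          = ∑ i ∈ I, ∑ j ∈ I, u i * u j * ⟪w i, w j⟫ := by
        refine Finset.sum_congr rfl fun i hi => Finset.sum_congr rfl fun j hj => ?_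
        rw [hGram i hi j hj, h7 i hi j hj]
      rw [e2, ← inner_sum_sum, hu, inner_zero_left]
    have hQl : Q (insert l I) := by
      refine ⟨insert_subset hl hIX, w, hw, ?_⟩
      intro u hu i hi
      have hul : u l = 0 := by
        by_contra hul
        refine hcon (fun i => -u i / u l) ?_
        rw [Finset.sum_insert hlI] at hu
        have h1 : w l = (u l)⁻¹ • (u l • w l) := by
          rw [smul_smul, inv_mul_cancel₀ hul, one_smul]
        rw [h1, eq_neg_of_add_eq_zero_left hu, smul_neg, Finset.smul_sum]
        rw [← Finset.sum_neg_distrib]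
        refine Finset.sum_congr rfl fun i _ => ?_
        rw [smul_smul, ← neg_smul]
        congr 1
        field_simp
      rw [Finset.sum_insert hlI, hul, zero_smul, zero_add] at hu
      rcases mem_insert.mp hi with h | h
      · rw [h]; exact hul
      · exact hwLI u hu i h
    have hmem : insert l I ∈ X.powerset.filter Q :=
      mem_filter.2 ⟨mem_powerset.2 (insert_subset hl hIX), hQl⟩
    have := hImax _ hmem
    rw [Finset.card_insert_of_notMem hlI] at this
    omega
  -- realizations of the Gram matrix on `I ∪ {j, k}`
  have key2 : ∀ j ∈ X, ∀ k ∈ X, ∃ w : α → E,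
      ∀ x ∈ insert j (insert k I), ∀ y ∈ insert j (insert k I), ⟪w x, w y⟫ = M x y := by
    intro j hj k hk
    refine H _ (insert_subset hj (insert_subset hk hIX)) ?_
    calc (insert j (insert k I)).card ≤ (insert k I).card + 1 := Finset.card_insert_le _ _
      _ ≤ (I.card + 1) + 1 := by have := Finset.card_insert_le k I; omega
      _ ≤ d + 2 := by omega
  -- choose coordinates for every point of X
  have hcex : ∀ j : α, ∃ cj : α → ℝ, j ∈ X →
      ∀ i' ∈ I, ∑ i ∈ I, cj i * M i i' = M j i' := by
    intro j
    by_cases hj : j ∈ X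
    · obtain ⟨w, hw⟩ := key2 j hj j hj
      rw [Finset.insert_idem] at hw
      obtain ⟨a, ha⟩ := key1 j hj w hw
      refine ⟨a, fun _ i' hi' => ?_⟩
      have h1 : ⟪w j, w i'⟫ = M j i' :=
        hw j (mem_insert_self _ _) i' (mem_insert_of_mem hi')
      rw [ha, sum_inner] at h1
      rw [← h1]
      refine Finset.sum_congr rfl fun i hi => ?_
      rw [real_inner_smul_left, hw i (mem_insert_of_mem hi) i' (mem_insert_of_mem hi')]
    · exact ⟨fun _ => 0, fun h => absurd h hj⟩
  choose c hc using hcex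
  -- uniqueness of the coordinates
  have huniq : ∀ j ∈ X, ∀ a : α → ℝ,
      (∀ i' ∈ I, ∑ i ∈ I, a i * M i i' = M j i') → ∀ i ∈ I, a i = c j i := by
    intro j hj a ha i hi
    set u : α → ℝ := fun i => a i - c j i with hu
    have hsys : ∀ i' ∈ I, ∑ i ∈ I, u i * M i i' = 0 := by
      intro i' hi'
      have h1 := ha i' hi'
      have h2 := hc j hj i' hi'
      have : ∑ i ∈ I, u i * M i i' = (∑ i ∈ I, a i * M i i') - ∑ i ∈ I, c j i * M i i' := by
        rw [← Finset.sum_sub_distrib]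
        exact Finset.sum_congr rfl fun i _ => by rw [hu]; ring
      rw [this, h1, h2, sub_self]
    have hz : ∑ i ∈ I, u i • v0 i = 0 := by
      rw [← inner_self_eq_zero (𝕜 := ℝ), inner_sum_sum]
      have e1 : ∑ i ∈ I, ∑ j' ∈ I, u i * u j' * ⟪v0 i, v0 j'⟫
          = ∑ j' ∈ I, u j' * ∑ i ∈ I, u i * M i j' := by
        rw [Finset.sum_comm]
        refine Finset.sum_congr rfl fun j' hj' => ?_
        rw [Finset.mul_sum]
        refine Finset.sum_congr rfl fun i hi' => ?_
        rw [hGram i hi' j' hj']; ring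
      rw [e1]
      refine Finset.sum_eq_zero fun j' hj' => ?_
      rw [hsys j' hj', mul_zero]
    have := hLI u hz i hi
    rw [hu] at this
    exact sub_eq_zero.mp this
  -- the global realization
  refine ⟨fun j => ∑ i ∈ I, c j i • v0 i, fun j hj k hk => ?_⟩
  obtain ⟨w, hw⟩ := key2 j hj k hk
  set S := insert j (insert k I) with hS
  have hsub : ∀ x ∈ I, x ∈ S := fun x hx => mem_insert_of_mem (mem_insert_of_mem hx)
  have hjS : j ∈ S := mem_insert_self _ _
  have hkS : k ∈ S := mem_insert_of_mem (mem_insert_self _ _)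
  have hwj : ∀ x ∈ insert j I, ∀ y ∈ insert j I, ⟪w x, w y⟫ = M x y := by
    intro x hx y hy
    have hss : insert j I ⊆ S := Finset.insert_subset_insert j (Finset.subset_insert k I)
    exact hw x (hss hx) y (hss hy)
  have hwk : ∀ x ∈ insert k I, ∀ y ∈ insert k I, ⟪w x, w y⟫ = M x y := by
    intro x hx y hy
    have hss : insert k I ⊆ S := Finset.insert_subset_iff.mpr ⟨hkS, fun z hz => hsub z hz⟩
    exact hw x (hss hx) y (hss hy)
  obtain ⟨a, haw⟩ := key1 j hj w hwj
  obtain ⟨b, hbw⟩ := key1 k hk w hwk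
  have syst : ∀ l : α, l ∈ S → ∀ aa : α → ℝ, w l = ∑ i ∈ I, aa i • w i →
      ∀ i' ∈ I, ∑ i ∈ I, aa i * M i i' = M l i' := by
    intro l hlS aa hla i' hi'
    have h1 : ⟪w l, w i'⟫ = M l i' := hw l hlS i' (hsub _ hi')
    rw [hla, sum_inner] at h1
    rw [← h1]
    exact Finset.sum_congr rfl fun i hi => by
      rw [real_inner_smul_left, hw i (hsub _ hi) i' (hsub _ hi')]
  have ha' : ∀ i ∈ I, a i = c j i := huniq j hj a (syst j hjS a haw)
  have hb' : ∀ i ∈ I, b i = c k i := huniq k hk b (syst k hkS b hbw)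
  have e1 : ⟪∑ i ∈ I, c j i • v0 i, ∑ i ∈ I, c k i • v0 i⟫
      = ∑ i ∈ I, ∑ i' ∈ I, c j i * c k i' * M i i' := by
    rw [inner_sum_sum]
    exact Finset.sum_congr rfl fun i hi => Finset.sum_congr rfl fun i' hi' => by
      rw [hGram i hi i' hi']
  have e2 : M j k = ∑ i ∈ I, ∑ i' ∈ I, c j i * c k i' * M i i' := by
    have h1 : ⟪w j, w k⟫ = M j k := hw j hjS k hkS
    rw [haw, hbw, inner_sum_sum] at h1
    rw [← h1]
    exact Finset.sum_congr rfl fun i hi => Finset.sum_congr rfl fun i' hi' => by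
      rw [hw i (hsub _ hi) i' (hsub _ hi'), ha' i hi, hb' i' hi']
  rw [e1, ← e2]

/-- Menger-type compactness: if every subset of `X` with at most `d + 3` points is
`d`-embeddable, then `X` is `d`-embeddable. -/
private lemma menger {X : Finset α} {ρ : α → α → ℝ} (hD : IsDistance X ρ) {d : ℕ}
    (H : ∀ S ⊆ X, S.card ≤ d + 3 → IsEmbeddable S ρ d) : IsEmbeddable X ρ d := by
  classical
  obtain ⟨hsymm, hnonneg, hdiag⟩ := hD
  rcases X.eq_empty_or_nonempty with rfl | ⟨x₀, hx₀⟩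
  · exact ⟨fun _ => 0, fun x hx => absurd hx (notMem_empty x)⟩
  set M : α → α → ℝ := fun x y => (ρ x₀ x ^ 2 + ρ x₀ y ^ 2 - ρ x y ^ 2) / 2 with hM
  have H' : ∀ S ⊆ X, S.card ≤ d + 2 →
      ∃ w : α → EuclideanSpace ℝ (Fin d), ∀ x ∈ S, ∀ y ∈ S, ⟪w x, w y⟫ = M x y := by
    intro S hSX hScard
    have hS' : insert x₀ S ⊆ X := insert_subset hx₀ hSX
    have hcard' : (insert x₀ S).card ≤ d + 3 := by
      have := Finset.card_insert_le x₀ S; omega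
    obtain ⟨φ, hφ⟩ := H _ hS' hcard'
    refine ⟨fun x => φ x - φ x₀, fun x hx y hy => ?_⟩
    have hxX : x ∈ X := hSX hx
    have hyX : y ∈ X := hSX hy
    have hx' : x ∈ insert x₀ S := mem_insert_of_mem hx
    have hy' : y ∈ insert x₀ S := mem_insert_of_mem hy
    have hx₀' : x₀ ∈ insert x₀ S := mem_insert_self _ _
    have e1 : ‖φ x - φ x₀‖ = ρ x₀ x := by
      rw [← dist_eq_norm, ← hφ x hx' x₀ hx₀', hsymm x hxX x₀ hx₀]
    have e2 : ‖φ y - φ x₀‖ = ρ x₀ y := by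
      rw [← dist_eq_norm, ← hφ y hy' x₀ hx₀', hsymm y hyX x₀ hx₀]
    have e3 : ‖(φ x - φ x₀) - (φ y - φ x₀)‖ = ρ x y := by
      have : (φ x - φ x₀) - (φ y - φ x₀) = φ x - φ y := by abel
      rw [this, ← dist_eq_norm, ← hφ x hx' y hy']
    have hpol := norm_sub_sq_real (φ x - φ x₀) (φ y - φ x₀)
    rw [e1, e2, e3] at hpol
    rw [hM]
    dsimp only
    linarith
  obtain ⟨v, hv⟩ := gram_glue X M H'
  refine ⟨v, fun x hx y hy => ?_⟩
  have h1 : dist (v x) (v y) ^ 2 = ρ x y ^ 2 := by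
    rw [dist_eq_norm, norm_sub_sq_real, ← real_inner_self_eq_norm_sq,
      ← real_inner_self_eq_norm_sq, hv x hx x hx, hv y hy y hy, hv x hx y hy, hM]
    dsimp only
    have hxx : ρ x x = 0 := hdiag x hx
    have hyy : ρ y y = 0 := hdiag y hy
    rw [hxx, hyy]
    ring
  have h2 := (sq_eq_sq₀ dist_nonneg (hnonneg x hx y hy)).mp h1
  exact h2.symm

end Aux

/-- if `(X, ρ)` is not `d`-embeddable, then there is a set `Â ⊆ X` of at
most `d + 3` points intersecting every inclusion-wise minimal `d`-outlier set. -/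
theorem stmt10 {α : Type*} [DecidableEq α] (X : Finset α) (ρ : α → α → ℝ)
    (hD : IsDistance X ρ) (d : ℕ) (hd : 1 ≤ d) (hnot : ¬ IsEmbeddable X ρ d) :
    ∃ A : Finset α, A ⊆ X ∧ A.card ≤ d + 3 ∧
      ∀ O : Finset α, O ⊆ X → IsEmbeddable (X \ O) ρ d →
        (∀ O' ⊂ O, ¬ IsEmbeddable (X \ O') ρ d) → (A ∩ O).Nonempty := by
  classical
  -- there is a non-embeddable subset of size at most d + 3
  have hA : ∃ A : Finset α, A ⊆ X ∧ A.card ≤ d + 3 ∧ ¬ IsEmbeddable A ρ d := by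
    by_contra h
    push_neg at h
    exact hnot (menger hD h)
  obtain ⟨A, hAX, hAcard, hAne⟩ := hA
  refine ⟨A, hAX, hAcard, fun O hOX hemb _ => ?_⟩
  rw [Finset.nonempty_iff_ne_empty]
  intro hinter
  apply hAne
  refine emb_mono ?_ hemb
  intro x hxA
  rw [Finset.mem_sdiff]
  refine ⟨hAX hxA, fun hxO => ?_⟩
  have : x ∈ A ∩ O := Finset.mem_inter.mpr ⟨hxA, hxO⟩
  rw [hinter] at this
  exact absurd this (Finset.notMem_empty x)
end

section
/- Let G be a graph with vertex set {v₁, …, vₙ} and let k ≤ n be a positive integer. Define the distance space (X, ρ) with X = {p₁, …, p_{k+2}} ∪ {x₁, …, xₙ} (all k + 2 + n points distinct) by: ρ(pᵢ, pⱼ) = |i − j| for all i, j ∈ {1,…,k+2}; ρ(pᵢ, xⱼ) = i + j for all i ∈ {1,…,k+2} and j ∈ {1,…,n}; and for distinct i, j ∈ {1,…,n}, ρ(xᵢ, xⱼ) = |i − j| if vᵢvⱼ is not an edge of G, and ρ(xᵢ, xⱼ) = 0 if vᵢvⱼ is an edge of G. Then G has a vertex cover of size at most k if and only if there exists a set O ⊆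 X with |O| ≤ k such that (X \ O, ρ) is 1-embeddable. -/
/-- The distance space of the vertex-cover reduction: points `p₁, …, p_{k+2}` (modelled
as `Sum.inl a` for `a : Fin (k+2)`, with `pᵢ = Sum.inl (i - 1)`) and `x₁, …, xₙ`
(modelled as `Sum.inr b` for `b : Fin n`, with `xⱼ = Sum.inr (j - 1)`). -/
def rhoVC {n : ℕ} (k : ℕ) (G : SimpleGraph (Fin n)) [DecidableRel G.Adj] :
    (Fin (k + 2) ⊕ Fin n) → (Fin (k + 2) ⊕ Fin n) → ℝ
  | Sum.inl a, Sum.inl b => |(a : ℝ) - (b : ℝ)|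
  | Sum.inl a, Sum.inr b => ((a : ℝ) + 1) + ((b : ℝ) + 1)
  | Sum.inr b, Sum.inl a => ((a : ℝ) + 1) + ((b : ℝ) + 1)
  | Sum.inr a, Sum.inr b => if G.Adj a b then 0 else |(a : ℝ) - (b : ℝ)|

section Embeddable

variable {α : Type*} {X : Finset α} {ρ : α → α → ℝ}

lemma isEmbeddable_one_of_eq_abs_sub (f : α → ℝ)
    (hf : ∀ x ∈ X, ∀ y ∈ X, ρ x y = |f x - f y|) : IsEmbeddable X ρ 1 := by
  refine ⟨fun x => WithLp.toLp 2 fun _ => f x, fun x hx y hy => ?_⟩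
  rw [EuclideanSpace.dist_eq, Fin.sum_univ_one, Real.dist_eq, sq_abs, Real.sqrt_sq_eq_abs]
  exact hf x hx y hy

lemma IsEmbeddable.eq_of_eq_zero {d : ℕ} (h : IsEmbeddable X ρ d) {x y z : α}
    (hx : x ∈ X) (hy : y ∈ X) (hz : z ∈ X) (hxy : ρ x y = 0) : ρ z x = ρ z y := by
  obtain ⟨φ, hφ⟩ := h
  have hφxy : φ x = φ y := dist_eq_zero.mp ((hφ x hx y hy).symm.trans hxy)
  rw [hφ z hz x hx, hφ z hz y hy, hφxy]

end Embeddable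

section VertexCover

variable {n k : ℕ} {G : SimpleGraph (Fin n)} [DecidableRel G.Adj]

lemma not_adj_of_isEmbeddable_rhoVC {X : Finset (Fin (k + 2) ⊕ Fin n)} {d : ℕ}
    (h : IsEmbeddable X (rhoVC k G) d) {i : Fin (k + 2)} {a b : Fin n}
    (hi : Sum.inl i ∈ X) (ha : Sum.inr a ∈ X) (hb : Sum.inr b ∈ X) : ¬ G.Adj a b := by
  intro hab
  have hdist := h.eq_of_eq_zero ha hb hi (by simp [rhoVC, hab])
  simp only [rhoVC, add_right_inj, add_left_inj, Nat.cast_inj, Fin.val_inj] at hdist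
  exact G.loopless.irrefl a (hdist ▸ hab)

lemma isEmbeddable_rhoVC_sdiff_of_cover {S : Finset (Fin n)}
    (hS : ∀ a b : Fin n, G.Adj a b → a ∈ S ∨ b ∈ S) :
    IsEmbeddable (Finset.univ \ S.map .inr) (rhoVC k G) 1 := by
  refine isEmbeddable_one_of_eq_abs_sub
    (Sum.elim (fun i : Fin (k + 2) => -((i : ℝ) + 1)) fun a : Fin n => (a : ℝ) + 1) ?_
  rintro (i | a) hx (j | b) hy
  · simp only [rhoVC, Sum.elim_inl]
    rw [← abs_neg]; ring_nf
  · simp only [rhoVC, Sum.elim_inl, Sum.elim_inr]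
    rw [neg_sub_left, abs_neg, abs_of_nonneg (by positivity), add_comm]
  · simp only [rhoVC, Sum.elim_inl, Sum.elim_inr]
    rw [sub_neg_eq_add, abs_of_nonneg (by positivity), add_comm]
  · simp only [Finset.mem_sdiff, Finset.mem_univ, true_and, Finset.mem_map,
      Function.Embedding.inr_apply, Sum.inr.injEq, exists_eq_right] at hx hy
    simp only [rhoVC, Sum.elim_inr, if_neg fun hab => (hS a b hab).elim hx hy]
    ring_nf

end VertexCover

theorem stmt11_general (n k : ℕ) (G : SimpleGraph (Fin n))
    [DecidableRel G.Adj] :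
    (∃ S : Finset (Fin n), S.card ≤ k ∧ ∀ a b : Fin n, G.Adj a b → a ∈ S ∨ b ∈ S) ↔
      ∃ O : Finset (Fin (k + 2) ⊕ Fin n), O.card ≤ k ∧
        IsEmbeddable (Finset.univ \ O) (rhoVC k G) 1 := by
  constructor
  · rintro ⟨S, hcard, hS⟩
    exact ⟨S.map .inr, (S.card_map _).trans_le hcard, isEmbeddable_rhoVC_sdiff_of_cover hS⟩
  · rintro ⟨O, hcard, hemb⟩
    obtain ⟨i, -, hi⟩ := Finset.exists_mem_notMem_of_card_lt_card (s := O.toLeft)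
      (t := Finset.univ) (by simpa using O.card_toLeft_le.trans_lt (by omega))
    refine ⟨O.toRight, O.card_toRight_le.trans hcard, fun a b hab => ?_⟩
    by_contra! hab'
    simp only [Finset.mem_toLeft, Finset.mem_toRight] at hi hab'
    exact not_adj_of_isEmbeddable_rhoVC hemb (by simpa using hi) (by simpa using hab'.1)
      (by simpa using hab'.2) hab

/-- `G` has a vertex cover of size at most `k` iff the distance space
`rhoVC` admits at most `k` outliers whose removal makes it `1`-embeddable. -/
theorem stmt11 (n k : ℕ) (hk : 1 ≤ k) (hkn : k ≤ n) (G : SimpleGraph (Fin n))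
    [DecidableRel G.Adj] :
    (∃ S : Finset (Fin n), S.card ≤ k ∧ ∀ a b : Fin n, G.Adj a b → a ∈ S ∨ b ∈ S) ↔
      ∃ O : Finset (Fin (k + 2) ⊕ Fin n), O.card ≤ k ∧
        IsEmbeddable (Finset.univ \ O) (rhoVC k G) 1 :=
  stmt11_general n k G
end

section
/- Let G be a graph with vertex set {v₁, …, vₙ}, let ℓ ≤ n(n−1)/2 be a positive integer, and set k = n(n−1)/2 − ℓ. Define the distance space (X, ρ) with X = {p₀, …, p_k} ∪ {x₁, …, xₙ} (all k + 1 + n points distinct) by: ρ(pᵢ, pⱼ) = 0 for all i, j ∈ {0,…,k}; ρ(pᵢ, xⱼ) = 1 for all i ∈ {0,…,k} and j ∈ {1,…,n}; and for distinct i, j ∈ {1,…,n}, ρ(xᵢ, xⱼ) = 2 if vᵢvⱼ is an edge of G and ρ(xᵢ, xⱼ) = 1 otherwise. Then G has a cut of size at least ℓ if and only if there exists a distance function ρ' on X that differs from ρ on at most k unordered pairs of distinct points of X such that (X, ρ') is 1-embeddable. -/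
/-- The distance space of the max-cut reduction: points `p₀, …, p_k` (modelled as
`Sum.inl a` for `a : Fin (k+1)`) and `x₁, …, xₙ` (modelled as `Sum.inr b` for
`b : Fin n`). -/
def rhoMC {n : ℕ} (k : ℕ) (G : SimpleGraph (Fin n)) [DecidableRel G.Adj] :
    (Fin (k + 1) ⊕ Fin n) → (Fin (k + 1) ⊕ Fin n) → ℝ
  | Sum.inl _, Sum.inl _ => 0
  | Sum.inl _, Sum.inr _ => 1
  | Sum.inr _, Sum.inl _ => 1
  | Sum.inr a, Sum.inr b => if a = b then 0 else if G.Adj a b then 2 else 1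

/-! A cut `A` is realized on the line by placing every `pₐ` at `0` and each `xⱼ` at `±1` according
to its side; the distances that change are then exactly those `ρ(xᵢ, xⱼ)` with `vᵢvⱼ` not a cut
edge, `n(n-1)/2 - |cut|` of them. Conversely, in a line embedding with at most `k` changes every
`xⱼ` lies at distance `1` from `p₀`: otherwise each of the `k + 1` points `pₐ` lies on a changed
pair, `{pₐ, p₀}` if `pₐ` has moved away from `p₀` and `{pₐ, xⱼ}` if not. So the `xⱼ` sit at
`p₀ ± 1`, the two sides form a cut, and the unchanged pairs among the `xⱼ` are cut edges. -/

open Finset Function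

lemma EuclideanSpace.dist_fin_one (x y : EuclideanSpace ℝ (Fin 1)) : dist x y = |x 0 - y 0| := by
  simp [EuclideanSpace.dist_eq, Real.dist_eq, Real.sqrt_sq_eq_abs]

lemma isEmbeddable_one_iff {α : Type*} (X : Finset α) (ρ : α → α → ℝ) :
    IsEmbeddable X ρ 1 ↔ ∃ f : α → ℝ, ∀ x ∈ X, ∀ y ∈ X, ρ x y = |f x - f y| := by
  constructor
  · rintro ⟨φ, hφ⟩
    exact ⟨fun x => φ x 0, fun x hx y hy => by rw [hφ x hx y hy, EuclideanSpace.dist_fin_one]⟩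
  · rintro ⟨f, hf⟩
    refine ⟨fun x => WithLp.toLp 2 (fun _ => f x), fun x hx y hy => ?_⟩
    rw [hf x hx y hy, EuclideanSpace.dist_fin_one]

section Mismatches

variable {α : Type*}

def mismatches (ρ ρ' : α → α → ℝ) : Set (α × α) :=
  {p | p.1 ≠ p.2 ∧ ρ' p.1 p.2 ≠ ρ p.1 p.2}

lemma swap_mem_mismatches {ρ ρ' : α → α → ℝ} (hρ : ∀ x y, ρ x y = ρ y x)
    (hρ' : ∀ x y, ρ' x y = ρ' y x) {p : α × α} (hp : p ∈ mismatches ρ ρ') :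
    p.swap ∈ mismatches ρ ρ' :=
  ⟨hp.1.symm, by rw [Prod.fst_swap, Prod.snd_swap, hρ, hρ']; exact hp.2⟩

lemma two_mul_card_le_ncard_of_swap_mem [Finite α] {ι : Type*} [Finite ι] {M : Set (α × α)}
    (hM : ∀ p ∈ M, p.swap ∈ M) (g : ι → α × α) (hg : Injective g) (hgM : ∀ i, g i ∈ M)
    (hg_swap : ∀ i j, g i ≠ (g j).swap) : 2 * Nat.card ι ≤ M.ncard := by
  have hinj : Injective (Sum.elim g (Prod.swap ∘ g)) := by
    rintro (i | i) (j | j) h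
    · exact congrArg Sum.inl (hg h)
    · exact absurd h (hg_swap i j)
    · exact absurd h.symm (hg_swap j i)
    · exact congrArg Sum.inr (hg (Prod.swap_injective h))
  calc 2 * Nat.card ι = (Set.univ : Set (ι ⊕ ι)).ncard := by
        rw [Set.ncard_univ, Nat.card_sum]; ring
    _ ≤ M.ncard := Set.ncard_le_ncard_of_injOn _
        (by rintro (i | i) - <;> simp [hgM, hM]) hinj.injOn

end Mismatches

section Cut

variable {V : Type*} [Finite V] (G : SimpleGraph V) (A : Set V)

def cutPairs : Set (V × V) := {p | G.Adj p.1 p.2 ∧ p.1 ∈ A ∧ p.2 ∉ A}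

lemma ncard_crossing_eq_two_mul :
    {p : V × V | G.Adj p.1 p.2 ∧ ¬(p.1 ∈ A ↔ p.2 ∈ A)}.ncard = 2 * (cutPairs G A).ncard := by
  have hsplit : {p : V × V | G.Adj p.1 p.2 ∧ ¬(p.1 ∈ A ↔ p.2 ∈ A)} =
      cutPairs G A ∪ Prod.swap '' cutPairs G A := by
    ext ⟨x, y⟩
    simp only [cutPairs, Set.image_swap_eq_preimage_swap, Set.mem_union, Set.mem_ofPred_eq,
      Set.mem_preimage, Prod.fst_swap, Prod.snd_swap, G.adj_comm y x]
    tauto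
  have hdisj : Disjoint (cutPairs G A) (Prod.swap '' cutPairs G A) := by
    rw [Set.image_swap_eq_preimage_swap, Set.disjoint_left]
    exact fun p hp hq => hq.2.2 hp.2.1
  rw [hsplit, Set.ncard_union_eq hdisj, Set.ncard_image_of_injective _ Prod.swap_injective]
  ring

lemma ncard_ne_not_crossing_add_two_mul :
    {p : V × V | p.1 ≠ p.2 ∧ ¬(G.Adj p.1 p.2 ∧ ¬(p.1 ∈ A ↔ p.2 ∈ A))}.ncard +
      2 * (cutPairs G A).ncard = Nat.card V * (Nat.card V - 1) := by
  classical
  have : Fintype V := Fintype.ofFinite V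
  have hne : {p : V × V | p.1 ≠ p.2} = ↑(univ : Finset V).offDiag := by ext; simp
  have hsub : {p : V × V | G.Adj p.1 p.2 ∧ ¬(p.1 ∈ A ↔ p.2 ∈ A)} ⊆ {p | p.1 ≠ p.2} :=
    fun p hp => hp.1.ne
  have hdiff : {p : V × V | p.1 ≠ p.2 ∧ ¬(G.Adj p.1 p.2 ∧ ¬(p.1 ∈ A ↔ p.2 ∈ A))} =
      {p | p.1 ≠ p.2} \ {p | G.Adj p.1 p.2 ∧ ¬(p.1 ∈ A ↔ p.2 ∈ A)} := rfl
  rw [← ncard_crossing_eq_two_mul, hdiff, Set.ncard_sdiff_add_ncard_of_subset hsub, hne,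
    Set.ncard_coe_finset, offDiag_card, card_univ, Nat.card_eq_fintype_card, Nat.mul_sub_one]

end Cut

lemma abs_sub_eq_ite_of_forall_eq_add_one_or_eq_sub_one {β : Type*} {f : β → ℝ} {c : ℝ}
    (hf : ∀ j, f j = c + 1 ∨ f j = c - 1) (i j : β) :
    |f i - f j| = if (f i = c + 1 ↔ f j = c + 1) then 0 else 2 := by
  have hne : c - 1 ≠ c + 1 := by linarith
  rcases hf i with hi | hi <;> rcases hf j with hj | hj <;>
    norm_num [hi, hj, hne, sub_add_eq_sub_sub]

section MaxCut

variable {n k : ℕ} (G : SimpleGraph (Fin n)) [DecidableRel G.Adj]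

lemma rhoMC_comm (x y : Fin (k + 1) ⊕ Fin n) : rhoMC k G x y = rhoMC k G y x := by
  rcases x with a | i <;> rcases y with b | j <;> simp [rhoMC, G.adj_comm, eq_comm]

lemma ite_eq_rhoMC_inr_iff (P : Fin n → Prop) [DecidablePred P] {i j : Fin n} (hij : i ≠ j) :
    (if (P i ↔ P j) then 0 else 2 : ℝ) = rhoMC k G (.inr i) (.inr j) ↔
      G.Adj i j ∧ ¬(P i ↔ P j) := by
  by_cases hP : P i ↔ P j <;> by_cases hadj : G.Adj i j <;> simp [rhoMC, hij, hP, hadj]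

lemma ncard_preimage_inr_mismatches_add (ρ' : Fin (k + 1) ⊕ Fin n → Fin (k + 1) ⊕ Fin n → ℝ)
    (A : Finset (Fin n))
    (hρ' : ∀ i j, ρ' (.inr i) (.inr j) = if (i ∈ A ↔ j ∈ A) then 0 else 2) :
    (Prod.map Sum.inr Sum.inr ⁻¹' mismatches (rhoMC k G) ρ').ncard +
      2 * (cutPairs G ↑A).ncard = n * (n - 1) := by
  have hpre : Prod.map Sum.inr Sum.inr ⁻¹' mismatches (rhoMC k G) ρ' =
      {p : Fin n × Fin n | p.1 ≠ p.2 ∧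
        ¬(G.Adj p.1 p.2 ∧ ¬(p.1 ∈ (A : Set (Fin n)) ↔ p.2 ∈ (A : Set (Fin n))))} := by
    ext ⟨i, j⟩
    by_cases hij : i = j
    · simp [mismatches, hij]
    · simp only [mismatches, Set.mem_preimage, Prod.map, Set.mem_ofPred_eq, ne_eq,
        Sum.inr.injEq, hij, not_false_eq_true, true_and, hρ', Finset.mem_coe]
      exact (ite_eq_rhoMC_inr_iff G (· ∈ A) hij).not
  rw [hpre, ncard_ne_not_crossing_add_two_mul, Nat.card_fin]

def cutPlacement (A : Finset (Fin n)) : Fin (k + 1) ⊕ Fin n → ℝ :=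
  Sum.elim 0 (fun j => if j ∈ A then 1 else -1)

lemma ncard_mismatches_cutPlacement_add (A : Finset (Fin n)) :
    (mismatches (rhoMC k G) (fun x y => |cutPlacement (k := k) A x - cutPlacement A y|)).ncard +
      2 * (cutPairs G ↑A).ncard = n * (n - 1) := by
  have hrange : mismatches (rhoMC k G) (fun x y => |cutPlacement (k := k) A x - cutPlacement A y|)
      ⊆ Set.range (Prod.map Sum.inr Sum.inr) := by
    rintro ⟨x | i, y | j⟩ ⟨-, h⟩
    · simp [rhoMC, cutPlacement] at h
    · simp only [rhoMC, cutPlacement, Sum.elim_inl, Sum.elim_inr] at h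
      split_ifs at h <;> norm_num at h
    · simp only [rhoMC, cutPlacement, Sum.elim_inl, Sum.elim_inr] at h
      split_ifs at h <;> norm_num at h
    · exact ⟨(i, j), rfl⟩
  rw [← Set.ncard_preimage_of_injective_subset_range
    (Sum.inr_injective.prodMap Sum.inr_injective) hrange]
  refine ncard_preimage_inr_mismatches_add G _ A fun i j => ?_
  simp only [cutPlacement, Sum.elim_inr]
  split_ifs <;> simp_all <;> norm_num

lemma abs_sub_inl_zero_eq_one (f : Fin (k + 1) ⊕ Fin n → ℝ)
    (hf : (mismatches (rhoMC k G) (fun x y => |f x - f y|)).ncard ≤ 2 * k) (j : Fin n) :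
    |f (.inr j) - f (.inl 0)| = 1 := by
  by_contra hj
  let w : Fin (k + 1) → Fin (k + 1) ⊕ Fin n := fun a =>
    if f (.inl a) = f (.inl 0) then .inr j else .inl 0
  have hw0 : w 0 = .inr j := if_pos rfl
  have hmem : ∀ a, (Sum.inl a, w a) ∈ mismatches (rhoMC k G) (fun x y => |f x - f y|) := by
    intro a
    by_cases ha : f (.inl a) = f (.inl 0)
    · simp only [w, if_pos ha]
      refine ⟨Sum.inl_ne_inr, ?_⟩
      simpa [rhoMC, ha, abs_sub_comm] using hj
    · simp only [w, if_neg ha]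
      exact ⟨fun h => ha (congrArg f h), by simpa [rhoMC, sub_eq_zero] using ha⟩
  have hswap : ∀ a b, (Sum.inl a, w a) ≠ (Sum.inl b, w b).swap := by
    intro a b h
    obtain ⟨hab, hba⟩ := Prod.mk.inj h
    have hb : w b = .inl 0 := by
      simp only [w] at hab ⊢
      split_ifs at hab ⊢
      rfl
    obtain rfl : a = 0 := Sum.inl_injective (hab.trans hb)
    exact Sum.inr_ne_inl (hw0.symm.trans hba)
  have := two_mul_card_le_ncard_of_swap_mem
    (fun _ => swap_mem_mismatches (rhoMC_comm G) fun _ _ => abs_sub_comm _ _)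
    (fun a => (Sum.inl a, w a)) (fun a b h => Sum.inl_injective (Prod.ext_iff.mp h).1) hmem hswap
  rw [Nat.card_fin] at this
  omega

lemma exists_cut_of_ncard_mismatches_le (f : Fin (k + 1) ⊕ Fin n → ℝ)
    (hf : (mismatches (rhoMC k G) (fun x y => |f x - f y|)).ncard ≤ 2 * k) :
    ∃ A : Finset (Fin n), n * (n - 1) ≤ 2 * k + 2 * (cutPairs G ↑A).ncard := by
  set c := f (.inl 0)
  have hpm : ∀ j, f (.inr j) = c + 1 ∨ f (.inr j) = c - 1 := fun j => by
    rcases abs_eq (zero_le_one' ℝ) |>.mp (abs_sub_inl_zero_eq_one G f hf j) with h | h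
    · exact .inl (by linarith)
    · exact .inr (by linarith)
  let A := univ.filter fun j => f (.inr j) = c + 1
  refine ⟨A, ?_⟩
  have hcount := ncard_preimage_inr_mismatches_add G (fun x y => |f x - f y|) A fun i j => by
    simpa [A] using abs_sub_eq_ite_of_forall_eq_add_one_or_eq_sub_one hpm i j
  have hle := Set.ncard_le_ncard_of_injOn (Prod.map Sum.inr Sum.inr) (fun _ h => h)
    (Sum.inr_injective.prodMap Sum.inr_injective).injOn
    (s := Prod.map Sum.inr Sum.inr ⁻¹' mismatches (rhoMC k G) (fun x y => |f x - f y|))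
    (t := mismatches (rhoMC k G) (fun x y => |f x - f y|))
  omega

end MaxCut

theorem stmt12_general (n ℓ k : ℕ) (hℓ : ℓ ≤ n * (n - 1) / 2)
    (hk : k = n * (n - 1) / 2 - ℓ) (G : SimpleGraph (Fin n)) [DecidableRel G.Adj] :
    (∃ A : Finset (Fin n),
        ℓ ≤ {p : Fin n × Fin n | G.Adj p.1 p.2 ∧ p.1 ∈ A ∧ p.2 ∉ A}.ncard) ↔
      ∃ ρ' : (Fin (k + 1) ⊕ Fin n) → (Fin (k + 1) ⊕ Fin n) → ℝ,
        (∀ x y, ρ' x y = ρ' y x) ∧ (∀ x y, 0 ≤ ρ' x y) ∧ (∀ x, ρ' x x = 0) ∧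
        {p : (Fin (k + 1) ⊕ Fin n) × (Fin (k + 1) ⊕ Fin n) |
            p.1 ≠ p.2 ∧ ρ' p.1 p.2 ≠ rhoMC k G p.1 p.2}.ncard ≤ 2 * k ∧
        IsEmbeddable Finset.univ ρ' 1 := by
  obtain ⟨r, hr⟩ := Nat.even_mul_pred_self n
  constructor
  · rintro ⟨A, hA⟩
    refine ⟨fun x y => |cutPlacement A x - cutPlacement A y|, fun x y => abs_sub_comm _ _,
      fun x y => abs_nonneg _, fun x => by simp, ?_,
      (isEmbeddable_one_iff _ _).mpr ⟨_, fun x _ y _ => rfl⟩⟩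
    have := ncard_mismatches_cutPlacement_add (k := k) G A
    change ℓ ≤ (cutPairs G ↑A).ncard at hA
    change (mismatches (rhoMC k G) fun x y => |cutPlacement A x - cutPlacement A y|).ncard
      ≤ 2 * k
    omega
  · rintro ⟨ρ', -, -, -, hcount, hemb⟩
    obtain ⟨f, hf⟩ := (isEmbeddable_one_iff _ _).mp hemb
    obtain rfl : ρ' = fun x y => |f x - f y| := by
      funext x y; exact hf x (mem_univ x) y (mem_univ y)
    obtain ⟨A, hA⟩ := exists_cut_of_ncard_mismatches_le G f hcount
    refine ⟨A, ?_⟩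
    change ℓ ≤ (cutPairs G ↑A).ncard
    omega

/-- `G` has a cut of size at least `ℓ` iff `rhoMC` can be made
`1`-embeddable by modifying at most `k = n(n-1)/2 - ℓ` distances between unordered
pairs of distinct points (counted as at most `2k` ordered pairs). -/
theorem stmt12 (n ℓ k : ℕ) (hℓ1 : 1 ≤ ℓ) (hℓ : ℓ ≤ n * (n - 1) / 2)
    (hk : k = n * (n - 1) / 2 - ℓ) (G : SimpleGraph (Fin n)) [DecidableRel G.Adj] :
    (∃ A : Finset (Fin n),
        ℓ ≤ {p : Fin n × Fin n | G.Adj p.1 p.2 ∧ p.1 ∈ A ∧ p.2 ∉ A}.ncard) ↔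
      ∃ ρ' : (Fin (k + 1) ⊕ Fin n) → (Fin (k + 1) ⊕ Fin n) → ℝ,
        (∀ x y, ρ' x y = ρ' y x) ∧ (∀ x y, 0 ≤ ρ' x y) ∧ (∀ x, ρ' x x = 0) ∧
        {p : (Fin (k + 1) ⊕ Fin n) × (Fin (k + 1) ⊕ Fin n) |
            p.1 ≠ p.2 ∧ ρ' p.1 p.2 ≠ rhoMC k G p.1 p.2}.ncard ≤ 2 * k ∧
        IsEmbeddable Finset.univ ρ' 1 :=
  stmt12_general n ℓ k hℓ hk G
end

section
/- For every positive integer r, every vector w ∈ ℚ^r, and every positive integer N, there exists a vector w̄ ∈ ℤ^r with ‖w̄‖_∞ ≤ 2^{4r³} · N^{r(r+2)} such that sign(w · b) = sign(w̄ · b) for all vectors b ∈ ℤ^r with ‖b‖₁ ≤ N − 1, where · denotes the standard inner product and sign(t) ∈ {−1, 0, 1} is the sign of the real number t. -/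
/-!
Induction on the number of nonzero coordinates of `w`. Scale `w` so that its largest coordinate
has absolute value `1`. Simultaneous Dirichlet approximation gives `q ≤ N ^ r` and `u ∈ ℤ^r` with
`q w = u + w'` and `‖w'‖_∞ ≤ 1 / N`; then `|w' · b| < 1` on the ball, and `w'` vanishes wherever
`w` does and at the largest coordinate, so it has fewer nonzero coordinates. If `z'` with
`‖z'‖_∞ ≤ M` has the signs of `w'` on the ball, then `M N u + z'` has those of `w`: unless the
integer `u · b` vanishes it dominates both `w' · b` and `z' · b / (M N)`.
-/

open Finset

section Sign

variable {α β : Type*} [Ring α] [LinearOrder α] [IsStrictOrderedRing α]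
  [Ring β] [LinearOrder β] [IsStrictOrderedRing β]

theorem sign_add_eq_of_abs_lt {x y : α} (h : |y| < |x|) :
    SignType.sign (x + y) = SignType.sign x := by
  rcases lt_trichotomy x 0 with hx | rfl | hx
  · rw [abs_of_neg hx] at h
    rw [sign_neg hx, sign_neg (lt_neg_iff_add_neg'.mp (abs_lt.mp h).2)]
  · exact absurd h (by simp)
  · rw [abs_of_pos hx] at h
    rw [sign_pos hx, sign_pos (neg_lt_iff_pos_add'.mp (abs_lt.mp h).1)]

theorem sign_intCast_add_eq_sign_mul_add (U : ℤ) {x : α} {y K : β} (hx : |x| < 1) (hy : |y| < K)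
    (hxy : SignType.sign x = SignType.sign y) :
    SignType.sign ((U : α) + x) = SignType.sign (K * U + y) := by
  rcases eq_or_ne U 0 with rfl | hU
  · simpa using hxy
  have hU1 : (1 : ℤ) ≤ |U| := Int.one_le_abs hU
  have hK : 0 < K := (abs_nonneg y).trans_lt hy
  have hxU : |x| < |(U : α)| := hx.trans_le (by exact_mod_cast hU1)
  have hyKU : |y| < |K * U| := by
    rw [abs_mul, abs_of_pos hK]
    exact hy.trans_le (le_mul_of_one_le_right hK.le (by exact_mod_cast hU1))
  rw [sign_add_eq_of_abs_lt hxU, sign_add_eq_of_abs_lt hyKU, sign_mul, sign_pos hK, one_mul,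
    sign_intCast, sign_intCast]

end Sign

theorem abs_sum_mul_le {ι α : Type*} [Fintype ι] [Ring α] [LinearOrder α] [IsStrictOrderedRing α]
    {x : ι → α} {M : α} (hx : ∀ i, |x i| ≤ M) (y : ι → α) :
    |∑ i, x i * y i| ≤ M * ∑ i, |y i| := by
  rw [mul_sum]
  refine (abs_sum_le_sum_abs _ _).trans (sum_le_sum fun i _ => ?_)
  rw [abs_mul]
  exact mul_le_mul_of_nonneg_right (hx i) (abs_nonneg _)

def SignsAgreeOnBall {ι α : Type*} [Fintype ι] [Ring α] [LinearOrder α]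
    (N : ℕ) (w : ι → α) (z : ι → ℤ) : Prop :=
  ∀ b : ι → ℤ, ∑ i, |b i| < N → SignType.sign (∑ i, w i * b i) = SignType.sign (∑ i, z i * b i)

variable {ι K : Type*} [Fintype ι] [Field K] [LinearOrder K] [IsStrictOrderedRing K]

section Rounding

variable {N q : ℕ} {x : K} {u : ℤ}

theorem intCast_eq_of_abs_sub_lt_inv {m : ℤ} (h : |(m : K) - u| < (N : K)⁻¹) : m = u := by
  have : |m - u| < 1 := by exact_mod_cast h.trans_le (Nat.cast_inv_le_one N)
  exact sub_eq_zero.1 (Int.abs_lt_one_iff.1 this)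

theorem abs_le_of_abs_mul_sub_lt_inv (hx : |x| ≤ 1) (h : |q * x - u| < (N : K)⁻¹) : |u| ≤ q := by
  have : (|u| : K) < q + 1 := calc
    (|u| : K) ≤ |q * x| + |q * x - u| := by
      simpa using abs_sub_le (0 : K) (q * x) u
    _ < q + 1 := by
      rw [abs_mul, Nat.abs_cast]
      exact add_lt_add_of_le_of_lt (mul_le_of_le_one_right q.cast_nonneg hx)
        (h.trans_le (Nat.cast_inv_le_one N))
  exact Int.lt_add_one_iff.1 (by exact_mod_cast this)

end Rounding

section Dirichlet

variable [FloorRing K] {N : ℕ}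

theorem exists_nat_mul_sub_int_lt_inv (v : ι → K) (hN : 0 < N) :
    ∃ q : ℕ, 0 < q ∧ q ≤ N ^ Fintype.card ι ∧
      ∃ u : ι → ℤ, ∀ i, |q * v i - u i| < (N : K)⁻¹ := by
  classical
  set box : ℕ → ι → ℤ := fun q i => ⌊N * Int.fract (q * v i)⌋
  have hbox : Set.MapsTo box (range (N ^ Fintype.card ι + 1))
      ↑(Fintype.piFinset fun _ : ι => Ico 0 (N : ℤ)) := by
    intro q _
    simp only [mem_coe, Fintype.mem_piFinset, mem_Ico, box]
    intro i
    have := Int.fract_lt_one (q * v i)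
    refine ⟨Int.floor_nonneg.2 (by positivity), Int.floor_lt.2 ?_⟩
    push_cast
    nlinarith [Int.fract_nonneg (q * v i), (Nat.cast_pos (α := K)).2 hN]
  obtain ⟨a, ha, b, hb, hne, hab⟩ := exists_ne_map_eq_of_card_lt_of_maps_to (by simp) hbox
  wlog hlt : a < b generalizing a b
  · exact this b hb a ha hne.symm hab.symm (by omega)
  refine ⟨b - a, by omega, by simp at hb; omega, fun i => ⌊b * v i⌋ - ⌊a * v i⌋, fun i => ?_⟩
  have := Int.abs_sub_lt_one_of_floor_eq_floor (congrFun hab.symm i)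
  rw [← mul_sub, abs_mul, Nat.abs_cast, ← lt_div_iff₀' (by positivity), one_div] at this
  convert this using 2
  rw [Nat.cast_sub hlt.le, ← Int.self_sub_floor, ← Int.self_sub_floor]
  push_cast
  ring

theorem exists_nat_mul_eq_int_add_small {v : ι → K} (hv : ∀ i, |v i| ≤ 1) (hN : 0 < N) :
    ∃ q : ℕ, 0 < q ∧ ∃ (u : ι → ℤ) (w' : ι → K), (∀ i, q * v i = u i + w' i) ∧
      (∀ i, |u i| ≤ N ^ Fintype.card ι) ∧ (∀ i, |w' i| ≤ (N : K)⁻¹) ∧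
      ∀ i, (∃ m : ℤ, v i = m) → w' i = 0 := by
  obtain ⟨q, hq, hqN, u, hqu⟩ := exists_nat_mul_sub_int_lt_inv v hN
  refine ⟨q, hq, u, fun i => q * v i - u i, fun i => by ring, fun i => ?_, fun i => (hqu i).le, ?_⟩
  · exact (abs_le_of_abs_mul_sub_lt_inv (hv i) (hqu i)).trans (by exact_mod_cast hqN)
  · rintro i ⟨m, hm⟩
    have h := hqu i
    rw [hm, ← Int.cast_natCast, ← Int.cast_mul] at h
    simp only [hm, sub_eq_zero]
    exact_mod_cast intCast_eq_of_abs_sub_lt_inv h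

end Dirichlet

namespace SignsAgreeOnBall

variable {N : ℕ}

theorem const_mul {v : ι → K} {z : ι → ℤ} {c : K} (hc : 0 < c) (h : SignsAgreeOnBall N v z) :
    SignsAgreeOnBall N (fun i => c * v i) z := by
  intro b hb
  simp_rw [mul_assoc, ← mul_sum, sign_mul, sign_pos hc, one_mul]
  exact h b hb

theorem of_nat_mul_eq_add {v w' : ι → K} {q : ℕ} (hq : 0 < q) {u : ι → ℤ}
    (hvu : ∀ i, q * v i = u i + w' i) (hw' : ∀ i, |w' i| ≤ (N : K)⁻¹) {z' : ι → ℤ} {M : ℤ}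
    (hM : 0 < M) (hz' : ∀ i, |z' i| ≤ M) (h' : SignsAgreeOnBall N w' z') :
    SignsAgreeOnBall N v (fun i => M * N * u i + z' i) := by
  intro b hb
  have hbK : ∑ i, |(b i : K)| < N := by exact_mod_cast hb
  have hN : (0 : K) < N := (sum_nonneg fun i _ => abs_nonneg _).trans_lt hbK
  have hsmall : |∑ i, w' i * b i| < 1 := calc
    _ ≤ (N : K)⁻¹ * ∑ i, |(b i : K)| := abs_sum_mul_le hw' _
    _ < (N : K)⁻¹ * N := mul_lt_mul_of_pos_left hbK (inv_pos.2 hN)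
    _ = 1 := inv_mul_cancel₀ hN.ne'
  have hbounded : |∑ i, z' i * b i| < M * N := calc
    _ ≤ M * ∑ i, |b i| := abs_sum_mul_le hz' _
    _ < M * N := mul_lt_mul_of_pos_left hb hM
  calc SignType.sign (∑ i, v i * b i)
      = SignType.sign ((q : K) * ∑ i, v i * b i) := by
        rw [sign_mul, sign_pos (Nat.cast_pos.2 hq), one_mul]
    _ = SignType.sign (((∑ i, u i * b i : ℤ) : K) + ∑ i, w' i * b i) := by
        simp_rw [mul_sum, ← mul_assoc, hvu, add_mul, sum_add_distrib]
        push_cast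
        rfl
    _ = SignType.sign (M * N * ∑ i, u i * b i + ∑ i, z' i * b i) :=
        sign_intCast_add_eq_sign_mul_add _ hsmall hbounded (h' b hb)
    _ = SignType.sign (∑ i, (M * N * u i + z' i) * b i) := by
        simp_rw [add_mul, sum_add_distrib, mul_sum, mul_assoc]

end SignsAgreeOnBall

variable [FloorRing K] {N : ℕ}

theorem exists_signsAgreeOnBall_of_forall_card_support_lt (hN : 0 < N) (w : ι → K)
    {M : ℤ} (hM : 0 < M)
    (ih : ∀ w' : ι → K, #{i | w' i ≠ 0} < #{i | w i ≠ 0} →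
      ∃ z' : ι → ℤ, (∀ i, |z' i| ≤ M) ∧ SignsAgreeOnBall N w' z') :
    ∃ z : ι → ℤ, (∀ i, |z i| ≤ 2 * N ^ (Fintype.card ι + 1) * M) ∧ SignsAgreeOnBall N w z := by
  by_cases hw : ∀ i, w i = 0
  · exact ⟨0, fun i => by simp; positivity, fun b _ => by simp [hw]⟩
  push Not at hw
  obtain ⟨j, hj⟩ := hw
  have : Nonempty ι := ⟨j⟩
  obtain ⟨i₀, hi₀⟩ := Finite.exists_max fun i => |w i|
  have hc : 0 < |w i₀| := (abs_pos.2 hj).trans_le (hi₀ j)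
  set v : ι → K := fun i => w i / |w i₀|
  have hv : ∀ i, |v i| ≤ 1 := fun i => by
    simpa [v, abs_div, div_le_one hc] using hi₀ i
  obtain ⟨q, hq, u, w', hvu, hu, hw', hw'_int⟩ := exists_nat_mul_eq_int_add_small hv hN
  have hsupp : #{i | w' i ≠ 0} < #{i | w i ≠ 0} := by
    refine card_lt_card ⟨fun i => ?_, fun hsub => ?_⟩
    · simp only [mem_filter, mem_univ, true_and]
      exact mt fun h0 => hw'_int i ⟨0, by simp [v, h0]⟩
    · have hv₀ : v i₀ = ((SignType.sign (w i₀) : ℤ) : K) := by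
        rw [SignType.intCast_cast, eq_comm, eq_div_iff hc.ne', sign_mul_abs]
      exact (by simpa using hsub (by simpa using abs_pos.1 hc) : w' i₀ ≠ 0) (hw'_int i₀ ⟨_, hv₀⟩)
  obtain ⟨z', hz', hagree⟩ := ih w' hsupp
  refine ⟨fun i => M * N * u i + z' i, fun i => ?_, ?_⟩
  · have hN1 : (1 : ℤ) ≤ N ^ (Fintype.card ι + 1) := one_le_pow₀ (by exact_mod_cast hN)
    calc |M * N * u i + z' i| ≤ M * N * N ^ Fintype.card ι + M := by
          refine (abs_add_le _ _).trans (add_le_add ?_ (hz' i))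
          rw [abs_mul, abs_of_pos (by positivity)]
          exact mul_le_mul_of_nonneg_left (hu i) (by positivity)
      _ ≤ 2 * N ^ (Fintype.card ι + 1) * M := by
          rw [pow_succ] at hN1 ⊢
          nlinarith [mul_le_mul_of_nonneg_left hN1 hM.le]
  · have hwv : (fun i => |w i₀| * v i) = w := funext fun i => mul_div_cancel₀ _ hc.ne'
    rw [← hwv]
    exact (SignsAgreeOnBall.of_nat_mul_eq_add hq hvu hw' hM hz' hagree).const_mul hc

theorem exists_signsAgreeOnBall_of_card_support_le (hN : 0 < N) (k : ℕ) :
    ∀ w : ι → K, #{i | w i ≠ 0} ≤ k →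
      ∃ z : ι → ℤ, (∀ i, |z i| ≤ (2 * N ^ (Fintype.card ι + 1)) ^ k) ∧ SignsAgreeOnBall N w z := by
  induction k with
  | zero =>
    intro w hw
    exact ⟨0, fun i => by simp, fun b _ => by simp [show ∀ i, w i = 0 by simpa using hw]⟩
  | succ k ih =>
    intro w hw
    obtain ⟨z, hz, hagree⟩ := exists_signsAgreeOnBall_of_forall_card_support_lt hN w
      (by positivity) fun w' hw' => ih w' (by omega)
    exact ⟨z, fun i => (hz i).trans_eq (by ring), hagree⟩

theorem stmt14_general (r : ℕ) (w : Fin r → ℚ) (N : ℕ) (hN : 1 ≤ N) :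
    ∃ wbar : Fin r → ℤ,
      (∀ i, |wbar i| ≤ 2 ^ (4 * r ^ 3) * (N : ℤ) ^ (r * (r + 2))) ∧
      ∀ b : Fin r → ℤ, (∑ i, |b i|) ≤ (N : ℤ) - 1 →
        SignType.sign (∑ i, w i * (b i : ℚ)) = SignType.sign (∑ i, wbar i * b i) := by
  obtain ⟨wbar, hbound, hagree⟩ := exists_signsAgreeOnBall_of_card_support_le hN r w
    ((card_filter_le _ _).trans (by simp))
  refine ⟨wbar, fun i => (hbound i).trans ?_, fun b hb => hagree b (by omega)⟩
  rw [Fintype.card_fin, mul_pow, ← pow_mul]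
  have hNZ : (1 : ℤ) ≤ N := by exact_mod_cast hN
  exact mul_le_mul (pow_le_pow_right₀ one_le_two (by nlinarith [Nat.le_self_pow three_ne_zero r]))
    (pow_le_pow_right₀ hNZ (by nlinarith)) (by positivity) (by positivity)

/-- Frank–Tardos: for every `w ∈ ℚ^r` and positive integer `N` there is
`w̄ ∈ ℤ^r` with `‖w̄‖_∞ ≤ 2^{4r³} N^{r(r+2)}` such that `sign(w · b) = sign(w̄ · b)` for
every `b ∈ ℤ^r` with `‖b‖₁ ≤ N - 1`. -/
theorem stmt14 (r : ℕ) (hr : 1 ≤ r) (w : Fin r → ℚ) (N : ℕ) (hN : 1 ≤ N) :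
    ∃ wbar : Fin r → ℤ,
      (∀ i, |wbar i| ≤ 2 ^ (4 * r ^ 3) * (N : ℤ) ^ (r * (r + 2))) ∧
      ∀ b : Fin r → ℤ, (∑ i, |b i|) ≤ (N : ℤ) - 1 →
        SignType.sign (∑ i, w i * (b i : ℚ)) = SignType.sign (∑ i, wbar i * b i) :=
  stmt14_general r w N hN
end
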